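/- arXiv:2509.25432 — 2 statements merged into one kernel-verified Lean document; each statement's English description precedes it below -/
import Mathlib

section
/- Let $k$ be an algebraically closed field and let $n \geq 0$ be an integer. Let $v_0, \dots, v_{n+1} \in k^3$ be nonzero vectors that are pairwise linearly independent, and suppose they all lie in a common $2$-dimensional linear subspace of $k^3$ (i.e., the corresponding $n+2$ distinct points of $\mathbb{P}^2_k$ are collinear). Then the evaluation map from the space of homogeneous polynomials of degree $n$ in $k[X_0, X_1, X_2]$ to $k^{n+2}$, sending $F \mapsto (F(v_0), \dots, F(v_{n+1}))$, is not surjective. -/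
/-!
Write the points as `v i = c i • a + d i • b` in a basis `a, b` of the plane they span. Substituting
`X₀ a + X₁ b` into a ternary form `F` of degree `n` gives a binary form `G` of degree `n` with
`F (v i) = G (c i, d i)`, so every value vector of the evaluation map is a value vector of binary
forms of degree `n`. These form a space of dimension `n + 1 < n + 2`.
-/

open MvPolynomial Module

namespace MvPolynomial

variable {k σ τ ι : Type*} [Field k]

theorem finrank_homogeneousSubmodule [Fintype σ] (n : ℕ) :
    finrank k (homogeneousSubmodule σ k n) = (Fintype.card σ + n - 1).choose n := by
  classical
  rw [homogeneousSubmodule_eq_finsupp_supported]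
  have e : {d : σ →₀ ℕ | d.degree = n} ≃ Sym σ n := (Sym.equivNatSum σ n).symm
  rw [((AddMonoidAlgebra.supportedEquivFinsupp _).trans (Finsupp.domLCongr e)).finrank_eq,
    finrank_finsupp_self, Sym.card_sym_eq_choose]

instance [Finite σ] (n : ℕ) : Module.Finite k (homogeneousSubmodule σ k n) :=
  Module.Finite.iff_fg.2 (homogeneousSubmodule_fg σ k n)

noncomputable def linearForms [Fintype τ] (b : τ → σ → k) (s : σ) : MvPolynomial τ k :=
  ∑ t, C (b t s) * X t

theorem eval_aeval_linearForms [Fintype τ] (b : τ → σ → k) (x : τ → k) (F : MvPolynomial σ k) :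
    eval x (aeval (linearForms b) F) = eval (∑ t, x t • b t) F := by
  change aeval x (aeval (linearForms b) F) = aeval (∑ t, x t • b t) F
  rw [← AlgHom.comp_apply, comp_aeval]
  congr 2
  funext s
  simp [linearForms, mul_comm]

theorem IsHomogeneous.aeval_linearForms [Fintype τ] {F : MvPolynomial σ k} {n : ℕ}
    (hF : F.IsHomogeneous n) (b : τ → σ → k) :
    (MvPolynomial.aeval (linearForms b) F).IsHomogeneous n := by
  simpa using hF.aeval (linearForms b) fun s =>
    IsHomogeneous.sum _ _ _ fun t _ => isHomogeneous_C_mul_X (b t s) t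

variable (k) in
noncomputable def evalHomogeneous (n : ℕ) (v : ι → σ → k) :
    homogeneousSubmodule σ k n →ₗ[k] ι → k :=
  LinearMap.pi fun i => (aeval (v i)).toLinearMap ∘ₗ (homogeneousSubmodule σ k n).subtype

theorem coe_evalHomogeneous (n : ℕ) (v : ι → σ → k) :
    ⇑(evalHomogeneous k n v) = fun (F : homogeneousSubmodule σ k n) i => eval (v i) F.1 :=
  rfl

theorem range_evalHomogeneous_le [Fintype τ] (n : ℕ) {v : ι → σ → k} (b : τ → σ → k)
    (x : ι → τ → k) (hv : ∀ i, v i = ∑ t, x i t • b t) :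
    LinearMap.range (evalHomogeneous k n v) ≤ LinearMap.range (evalHomogeneous k n x) := by
  rintro _ ⟨F, rfl⟩
  have hG := ((mem_homogeneousSubmodule n _).1 F.2).aeval_linearForms b
  refine ⟨⟨aeval (linearForms b) F.1, hG⟩, ?_⟩
  funext i
  simp only [coe_evalHomogeneous, hv]
  exact eval_aeval_linearForms b (x i) F.1

theorem finrank_range_evalHomogeneous_le [Fintype ι] (n : ℕ) {W : Submodule k (σ → k)}
    [FiniteDimensional k W] {v : ι → σ → k} (hv : ∀ i, v i ∈ W) :
    finrank k (LinearMap.range (evalHomogeneous k n v)) ≤ (finrank k W + n - 1).choose n := by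
  let b := Module.finBasis k W
  have hv_eq : ∀ i, v i = ∑ t, b.repr ⟨v i, hv i⟩ t • (b t : σ → k) := by
    intro i
    have := congrArg Subtype.val (b.sum_repr ⟨v i, hv i⟩)
    simp only [Submodule.coe_sum, Submodule.coe_smul] at this
    exact this.symm
  calc finrank k (LinearMap.range (evalHomogeneous k n v))
      ≤ finrank k (LinearMap.range (evalHomogeneous k n fun i t => b.repr ⟨v i, hv i⟩ t)) :=
        Submodule.finrank_mono (range_evalHomogeneous_le n _ _ hv_eq)
    _ ≤ finrank k (homogeneousSubmodule (Fin (finrank k W)) k n) := LinearMap.finrank_range_le _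
    _ = (finrank k W + n - 1).choose n := by
        rw [finrank_homogeneousSubmodule, Fintype.card_fin]

end MvPolynomial

theorem collinear_points_fail_independent_conditions_general
    (k : Type*) [Field k] (n : ℕ)
    (v : Fin (n + 2) → (Fin 3 → k))
    (hcol : ∃ W : Submodule k (Fin 3 → k), Module.finrank k W = 2 ∧ ∀ i, v i ∈ W) :
    ¬ Function.Surjective
      (fun F : MvPolynomial.homogeneousSubmodule (Fin 3) k n =>
        fun i : Fin (n + 2) => MvPolynomial.eval (v i) (F : MvPolynomial (Fin 3) k)) := by
  rw [← coe_evalHomogeneous, ← LinearMap.range_eq_top]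
  intro hrange
  obtain ⟨W, hW, hvW⟩ := hcol
  have hle := finrank_range_evalHomogeneous_le n hvW
  rw [hrange, finrank_top, finrank_fin_fun, hW, show 2 + n - 1 = n + 1 by omega,
    Nat.choose_succ_self_right] at hle
  omega

/-- `n+2` distinct collinear points of `ℙ²` over an algebraically closed field fail to impose
independent conditions on curves of degree `n`: the evaluation map from degree-`n` homogeneous
polynomials in `k[X₀,X₁,X₂]` to `k^{n+2}` is not surjective. -/
theorem collinear_points_fail_independent_conditions
    (k : Type*) [Field k] [IsAlgClosed k] (n : ℕ)
    (v : Fin (n + 2) → (Fin 3 → k))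
    (hv : ∀ i, v i ≠ 0)
    (hind : ∀ i j, i ≠ j → LinearIndependent k ![v i, v j])
    (hcol : ∃ W : Submodule k (Fin 3 → k), Module.finrank k W = 2 ∧ ∀ i, v i ∈ W) :
    ¬ Function.Surjective
      (fun F : MvPolynomial.homogeneousSubmodule (Fin 3) k n =>
        fun i : Fin (n + 2) => MvPolynomial.eval (v i) (F : MvPolynomial (Fin 3) k)) :=
  collinear_points_fail_independent_conditions_general k n v hcol
end

section
/- Let $k$ be an algebraically closed field and let $n \geq 0$ be an integer. Let $v_0, \dots, v_{n+1} \in k^3$ be nonzero vectors that are pairwise linearly independent and not all contained in a common $2$-dimensional linear subspace of $k^3$. Then there exist an index $j$ and a homogeneous polynomial $F \in k[X_0, X_1, X_2]$ of degree $n$ such that $F(v_i) = 0$ for all $i \neq j$ and $F(v_j) \neq 0$. In other words, given $n+2$ distinct non-collinear points of $\mathbb{P}^2_k$, there is a plane curve of degree $n$ passing through all but one of these points and missing the remaining point. -/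
/-!
Two of the points, `v 0` and `v 1`, span a plane, and by non-collinearity some point `v j` lies
off it. A linear form vanishing on that plane but not at `v j` takes care of `v 0` and `v 1` at
once; since the points are pairwise independent, each of the `n - 1` remaining points `v i` is
killed by a linear form not vanishing at `v j`. The product of these `n` linear forms is the
required curve.
-/

open MvPolynomial

namespace MvPolynomial

variable {σ R : Type*} [Fintype σ] [CommSemiring R]

noncomputable def ofLinearForm (φ : (σ → R) →ₗ[R] R) : MvPolynomial σ R :=
  ∑ s, C (φ (Pi.basisFun R σ s)) * X s

@[simp]
theorem eval_ofLinearForm (φ : (σ → R) →ₗ[R] R) (w : σ → R) :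
    eval w (ofLinearForm φ) = φ w := by
  conv_rhs => rw [← (Pi.basisFun R σ).sum_repr w, map_sum]
  simp [ofLinearForm, mul_comm]

theorem isHomogeneous_ofLinearForm (φ : (σ → R) →ₗ[R] R) :
    (ofLinearForm φ).IsHomogeneous 1 :=
  IsHomogeneous.sum _ _ _ fun s _ => by
    simpa using (isHomogeneous_C σ _).mul (isHomogeneous_X R s)

theorem exists_isHomogeneous_eval_eq_zero_ne_zero [NoZeroDivisors R] [Nontrivial R]
    {ι : Type*} (s : Finset ι) (φ : ι → (σ → R) →ₗ[R] R) (w : σ → R)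
    (hw : ∀ i ∈ s, φ i w ≠ 0) :
    ∃ F : MvPolynomial σ R, F.IsHomogeneous s.card ∧
      (∀ x, (∃ i ∈ s, φ i x = 0) → eval x F = 0) ∧ eval w F ≠ 0 := by
  refine ⟨∏ i ∈ s, ofLinearForm (φ i), ?_, fun x ⟨i, hi, hφx⟩ => ?_, ?_⟩
  · simpa using IsHomogeneous.prod s _ (fun _ => 1) fun i _ => isHomogeneous_ofLinearForm (φ i)
  · simpa [map_prod] using Finset.prod_eq_zero hi hφx
  · simpa [map_prod, Finset.prod_ne_zero_iff] using hw

end MvPolynomial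

theorem LinearIndependent.exists_linearForm_eq_zero_ne_zero {K V : Type*} [Field K]
    [AddCommGroup V] [Module K V] {x y : V} (h : LinearIndependent K ![x, y]) :
    ∃ φ : V →ₗ[K] K, φ x = 0 ∧ φ y ≠ 0 := by
  have hy : y ∉ Submodule.span K {x} := by
    simpa [Submodule.mem_span_singleton] using (LinearIndependent.pair_iff' (h.ne_zero 0)).1 h
  obtain ⟨φ, hφy, hφx⟩ := Submodule.exists_le_ker_of_notMem hy
  exact ⟨φ, hφx (Submodule.mem_span_singleton_self x), hφy⟩

theorem exists_notMem_span_pair {K V ι : Type*} [Field K] [AddCommGroup V]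
    [Module K V] {v : ι → V} {a b : ι} (hab : LinearIndependent K ![v a, v b])
    (hncol : ¬ ∃ W : Submodule K V, Module.finrank K W = 2 ∧ ∀ i, v i ∈ W) :
    ∃ j, v j ∉ Submodule.span K (Set.range ![v a, v b]) := by
  by_contra! h
  exact hncol ⟨_, by simpa using finrank_span_eq_card hab, h⟩

theorem exists_curve_through_all_but_one_general
    (k : Type*) [Field k] (n : ℕ)
    (v : Fin (n + 2) → (Fin 3 → k))
    (hind : ∀ i j, i ≠ j → LinearIndependent k ![v i, v j])
    (hncol : ¬ ∃ W : Submodule k (Fin 3 → k), Module.finrank k W = 2 ∧ ∀ i, v i ∈ W) :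
    ∃ (j : Fin (n + 2)) (F : MvPolynomial (Fin 3) k), F.IsHomogeneous n ∧
      (∀ i, i ≠ j → MvPolynomial.eval (v i) F = 0) ∧ MvPolynomial.eval (v j) F ≠ 0 := by
  classical
  set W := Submodule.span k (Set.range ![v 0, v 1])
  have hW0 : v 0 ∈ W := Submodule.subset_span ⟨0, rfl⟩
  have hW1 : v 1 ∈ W := Submodule.subset_span ⟨1, rfl⟩
  obtain ⟨j, hj⟩ := exists_notMem_span_pair (hind 0 1 (by simp)) hncol
  have hj0 : j ≠ 0 := by rintro rfl; exact hj hW0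
  have hj1 : j ≠ 1 := by rintro rfl; exact hj hW1
  obtain ⟨g, hgj, hgW⟩ := Submodule.exists_le_ker_of_notMem hj
  choose! f hf using fun i (hi : i ≠ j) => (hind i j hi).exists_linearForm_eq_zero_ne_zero
  set s := (Finset.univ.erase j).erase 1
  have h0s : (0 : Fin (n + 2)) ∈ s := by simp [s, hj0.symm]
  set φ := Function.update f 0 g
  have hcover : ∀ i ≠ j, ∃ l ∈ s, φ l (v i) = 0 := by
    intro i hi
    by_cases hi1 : i = 1
    · exact ⟨0, h0s, by simpa [φ, hi1] using hgW hW1⟩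
    by_cases hi0 : i = 0
    · exact ⟨0, h0s, by simpa [φ, hi0] using hgW hW0⟩
    exact ⟨i, by simp [s, hi, hi1], by simpa [φ, hi0] using (hf i hi).1⟩
  have hφj : ∀ i ∈ s, φ i (v j) ≠ 0 := by
    intro i hi
    by_cases hi0 : i = 0
    · simpa [φ, hi0] using hgj
    · simpa [φ, hi0] using (hf i (Finset.ne_of_mem_erase (Finset.mem_of_mem_erase hi))).2
  obtain ⟨F, hF, hFv, hFj⟩ := exists_isHomogeneous_eval_eq_zero_ne_zero s φ (v j) hφj
  exact ⟨j, F, by simpa [s, Finset.card_erase_of_mem, hj1.symm] using hF,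
    fun i hi => hFv _ (hcover i hi), hFj⟩

/-- Given `n+2` distinct non-collinear points of `ℙ²` over an algebraically closed field,
there is a plane curve of degree `n` passing through all but one of the points and missing
the remaining one. -/
theorem exists_curve_through_all_but_one
    (k : Type*) [Field k] [IsAlgClosed k] (n : ℕ)
    (v : Fin (n + 2) → (Fin 3 → k))
    (hv : ∀ i, v i ≠ 0)
    (hind : ∀ i j, i ≠ j → LinearIndependent k ![v i, v j])
    (hncol : ¬ ∃ W : Submodule k (Fin 3 → k), Module.finrank k W = 2 ∧ ∀ i, v i ∈ W) :
    ∃ (j : Fin (n + 2)) (F : MvPolynomial (Fin 3) k), F.IsHomogeneous n ∧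
      (∀ i, i ≠ j → MvPolynomial.eval (v i) F = 0) ∧ MvPolynomial.eval (v j) F ≠ 0 :=
  exists_curve_through_all_but_one_general k n v hind hncol
end
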